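/- Let a ∈ ℂ, and let L_7^a be the 7-dimensional complex Lie algebra with basis x_1, …, x_7 and non-trivial brackets [x_1,x_2]=x_3, [x_1,x_3]=x_4, [x_1,x_6]=−x_1, [x_1,x_7]=−x_5, [x_2,x_6]=−a·x_2, [x_2,x_7]=−x_2, [x_6,x_3]=(1+a)x_3, [x_3,x_7]=−x_3, [x_4,x_6]=−(2+a)x_4, [x_4,x_7]=−x_4, [x_5,x_6]=−x_5. For x ∈ ℂ^7 let A_x be the 7×7 skew-symmetric matrix with (i,j) entry Σ_k c_{ij}^k x_k, where c_{ij}^k are the structure constants of L_7^a, and let R = max_{y ∈ ℂ^7} rank A_y. Then there exists a nonzero polynomial F in 14 variables over ℂ such that for every (x, a') ∈ ℂ^7 × ℂ^7 with F(x, a') ≠ 0 and every (α, β) ∈ ℂ² with (α, β) ≠ (0, 0), one has rank(αA_x + βA_{a'}) = R. (Hence the generic pencil has no Jordan blocks, i.e. L_7^a is of Kronecker type.) -/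

import Mathlib

open Matrix

noncomputable section

/-- The skew-symmetric matrix `A_x` (with `(i,j)` entry `Σ_k c_ij^k x_k`) of the
7-dimensional complex Lie algebra `L7` with non-trivial brackets
`[x₁,x₂]=x₃, [x₁,x₃]=x₄, [x₁,x₆]=-x₁, [x₁,x₇]=-x₅, [x₂,x₆]=-a·x₂, [x₂,x₇]=-x₂, [x₆,x₃]=(1+a)x₃, [x₃,x₇]=-x₃, [x₄,x₆]=-(2+a)x₄, [x₄,x₇]=-x₄, [x₅,x₆]=-x₅`. -/
def L7mat (a : ℂ) (x : Fin 7 → ℂ) : Matrix (Fin 7) (Fin 7) ℂ :=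
  !![0, x 2, x 3, 0, 0, -x 0, -x 4;
     -x 2, 0, 0, 0, 0, -a * x 1, -x 1;
     -x 3, 0, 0, 0, 0, -(1 + a) * x 2, -x 2;
     0, 0, 0, 0, 0, -(2 + a) * x 3, -x 3;
     0, 0, 0, 0, 0, -x 4, 0;
     x 0, a * x 1, (1 + a) * x 2, (2 + a) * x 3, x 4, 0, 0;
     x 4, x 1, x 2, x 3, 0, 0, 0]

/-!
`A_y` is skew-symmetric of odd size, so `rank A_y ≤ 6`. Indexing coordinates from `0` as in
`L7mat`, the principal `6 × 6` minors obtained by deleting index `1`, `3`, `4` are the squares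
of the Pfaffians `y₃² y₄`, `y₄ (y₂² - y₁ y₃)` and `y₃ (y₂² - 2 y₁ y₃)`, which vanish
simultaneously only on `{y₃ = y₄ = 0} ∪ {y₂ = y₃ = 0} ∪ {y₄ = 0, y₂² = 2 y₁ y₃}`.
Since `A` is linear in `y`, `α A_x + β A_a' = A_(α x + β a')`, and the line spanned by `x, a'`
misses each of these codimension-two sets once the Plücker coordinates `p₂₃`, `p₃₄` and
`p₂₄² - 2 p₁₄ p₃₄` are nonzero; their product is `F`.
-/

namespace Matrix

variable {m n k K : Type*} [Fintype n] [Field K]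

theorem det_eq_zero_of_transpose_eq_neg [DecidableEq n] {R : Type*} [CommRing R]
    [IsAddTorsionFree R] {A : Matrix n n R} (hA : Aᵀ = -A) (hn : Odd (Fintype.card n)) :
    A.det = 0 :=
  self_eq_neg.mp <| calc
    A.det = Aᵀ.det := A.det_transpose.symm
    _ = -A.det := by rw [hA, det_neg, hn.neg_one_pow, neg_one_mul]

theorem rank_lt_card_of_det_eq_zero [DecidableEq n] {A : Matrix n n K} (h : A.det = 0) :
    A.rank < Fintype.card n := by
  obtain ⟨v, hv, hAv⟩ := exists_mulVec_eq_zero_iff.mpr h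
  refine A.rank_le_card_width.lt_of_ne fun hrank => hv ?_
  have hsurj : Function.Surjective A.mulVecLin :=
    LinearMap.range_eq_top.mp <| Submodule.eq_top_of_finrank_eq <| by simpa [rank] using hrank
  exact LinearMap.injective_iff_surjective.mpr hsurj (by simpa using hAv)

theorem card_le_rank_of_det_submatrix_ne_zero [Fintype k] [DecidableEq k] (A : Matrix m n K)
    (r : k → m) (c : k → n) (h : (A.submatrix r c).det ≠ 0) : Fintype.card k ≤ A.rank :=
  (rank_of_det_ne_zero h).symm.le.trans (A.rank_submatrix_le r c)

end Matrix

theorem exists_eq_mul_of_mul_add_mul_eq_zero {K : Type*} [Field K] {u v α β : K}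
    (h : α * u + β * v = 0) (huv : (u, v) ≠ (0, 0)) : ∃ t, α = t * v ∧ β = -(t * u) := by
  rcases eq_or_ne v 0 with rfl | hv
  · have hu : u ≠ 0 := fun hu => huv (by rw [hu])
    refine ⟨-β / u, ?_, by field_simp⟩
    simpa [hu] using h
  · exact ⟨α / v, by field_simp, by field_simp; linear_combination h⟩

theorem mul_add_mul_ne_zero_or_ne_zero {K : Type*} [Field K] {u₁ u₂ v₁ v₂ α β : K}
    (hdet : u₁ * v₂ - u₂ * v₁ ≠ 0) (hαβ : (α, β) ≠ (0, 0)) :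
    α * u₁ + β * v₁ ≠ 0 ∨ α * u₂ + β * v₂ ≠ 0 := by
  by_contra! ⟨h₁, h₂⟩
  refine hαβ (Prod.ext ?_ ?_)
  · have : α * (u₁ * v₂ - u₂ * v₁) = 0 := by linear_combination v₂ * h₁ - v₁ * h₂
    exact (mul_eq_zero.mp this).resolve_right hdet
  · have : β * (u₁ * v₂ - u₂ * v₁) = 0 := by linear_combination u₁ * h₂ - u₂ * h₁
    exact (mul_eq_zero.mp this).resolve_right hdet

section L7

variable (a : ℂ) (y : Fin 7 → ℂ)

theorem transpose_L7mat : (L7mat a y)ᵀ = -L7mat a y := by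
  ext i j
  fin_cases i <;> fin_cases j <;> simp [L7mat] <;> ring

theorem rank_L7mat_le : (L7mat a y).rank ≤ 6 :=
  Nat.le_of_lt_succ <| by
    simpa using rank_lt_card_of_det_eq_zero <|
      det_eq_zero_of_transpose_eq_neg (transpose_L7mat a y) (by decide)

theorem L7mat_add_smul (α β : ℂ) (x x' : Fin 7 → ℂ) :
    α • L7mat a x + β • L7mat a x' = L7mat a (α • x + β • x') := by
  ext i j
  fin_cases i <;> fin_cases j <;> simp [L7mat] <;> ring

theorem det_L7mat_submatrix_succAbove_one :
    ((L7mat a y).submatrix (Fin.succAbove 1) (Fin.succAbove 1)).det = (y 3 ^ 2 * y 4) ^ 2 := by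
  simp [L7mat, det_succ_row_zero, Fin.sum_univ_succ, Fin.succAbove]
  ring

theorem det_L7mat_submatrix_succAbove_three :
    ((L7mat a y).submatrix (Fin.succAbove 3) (Fin.succAbove 3)).det =
      (y 4 * (y 2 ^ 2 - y 1 * y 3)) ^ 2 := by
  simp [L7mat, det_succ_row_zero, Fin.sum_univ_succ, Fin.succAbove]
  ring

theorem det_L7mat_submatrix_succAbove_four :
    ((L7mat a y).submatrix (Fin.succAbove 4) (Fin.succAbove 4)).det =
      (y 3 * (y 2 ^ 2 - 2 * y 1 * y 3)) ^ 2 := by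
  simp [L7mat, det_succ_row_zero, Fin.sum_univ_succ, Fin.succAbove]
  ring

end L7

theorem rank_L7mat_eq_six {a : ℂ} {y : Fin 7 → ℂ} (h : y 3 ^ 2 * y 4 ≠ 0 ∨
    y 4 * (y 2 ^ 2 - y 1 * y 3) ≠ 0 ∨ y 3 * (y 2 ^ 2 - 2 * y 1 * y 3) ≠ 0) :
    (L7mat a y).rank = 6 := by
  refine (rank_L7mat_le a y).antisymm ?_
  have key (i : Fin 7) (hi : ((L7mat a y).submatrix i.succAbove i.succAbove).det ≠ 0) :
      6 ≤ (L7mat a y).rank := by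
    simpa using card_le_rank_of_det_submatrix_ne_zero _ _ _ hi
  rcases h with h | h | h
  · exact key 1 (by rw [det_L7mat_submatrix_succAbove_one]; exact pow_ne_zero 2 h)
  · exact key 3 (by rw [det_L7mat_submatrix_succAbove_three]; exact pow_ne_zero 2 h)
  · exact key 4 (by rw [det_L7mat_submatrix_succAbove_four]; exact pow_ne_zero 2 h)

theorem isGreatest_rank_L7mat (a : ℂ) :
    IsGreatest {r : ℕ | ∃ y : Fin 7 → ℂ, (L7mat a y).rank = r} 6 :=
  ⟨⟨Pi.single 3 1 + Pi.single 4 1, rank_L7mat_eq_six (Or.inl (by simp))⟩,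
    by rintro _ ⟨y, rfl⟩; exact rank_L7mat_le a y⟩

theorem L7_pfaffian_ne_zero_on_line {x x' : Fin 7 → ℂ} {α β : ℂ}
    (h23 : x 2 * x' 3 - x 3 * x' 2 ≠ 0) (h34 : x 3 * x' 4 - x 4 * x' 3 ≠ 0)
    (hQ : (x 2 * x' 4 - x 4 * x' 2) ^ 2 -
      2 * (x 1 * x' 4 - x 4 * x' 1) * (x 3 * x' 4 - x 4 * x' 3) ≠ 0)
    (hαβ : (α, β) ≠ (0, 0)) :
    let z := α • x + β • x'
    z 3 ^ 2 * z 4 ≠ 0 ∨ z 4 * (z 2 ^ 2 - z 1 * z 3) ≠ 0 ∨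
      z 3 * (z 2 ^ 2 - 2 * z 1 * z 3) ≠ 0 := by
  intro z
  have hz (i : Fin 7) : z i = α * x i + β * x' i := rfl
  by_cases h3 : z 3 = 0
  · have h2 : z 2 ≠ 0 :=
      (mul_add_mul_ne_zero_or_ne_zero h23 hαβ).resolve_right (not_not_intro h3)
    have h4 : z 4 ≠ 0 :=
      (mul_add_mul_ne_zero_or_ne_zero h34 hαβ).resolve_left (not_not_intro h3)
    exact Or.inr (Or.inl (by simp [h2, h3, h4]))
  by_cases h4 : z 4 = 0
  swap
  · exact Or.inl (mul_ne_zero (pow_ne_zero 2 h3) h4)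
  refine Or.inr (Or.inr (mul_ne_zero h3 ?_))
  have hx4 : (x 4, x' 4) ≠ (0, 0) := by
    intro h
    simp only [Prod.mk.injEq] at h
    simp [h.1, h.2] at h34
  -- on the line, `z₄ = 0` singles out the point `x'₄ x - x₄ x'`
  obtain ⟨t, rfl, rfl⟩ := exists_eq_mul_of_mul_add_mul_eq_zero h4 hx4
  have ht : t ≠ 0 := by
    rintro rfl
    simp at hαβ
  have hQz : z 2 ^ 2 - 2 * z 1 * z 3 = t ^ 2 * ((x 2 * x' 4 - x 4 * x' 2) ^ 2 -
      2 * (x 1 * x' 4 - x 4 * x' 1) * (x 3 * x' 4 - x 4 * x' 3)) := by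
    simp only [hz]
    ring
  rw [hQz]
  exact mul_ne_zero (pow_ne_zero 2 ht) hQ

open MvPolynomial

def pluckerCoord {ι R : Type*} [CommRing R] (i j : ι) : MvPolynomial (ι ⊕ ι) R :=
  X (.inl i) * X (.inr j) - X (.inl j) * X (.inr i)

@[simp]
theorem eval_pluckerCoord {ι R : Type*} [CommRing R] (x x' : ι → R) (i j : ι) :
    eval (Sum.elim x x') (pluckerCoord i j) = x i * x' j - x j * x' i := by
  simp [pluckerCoord]

def L7genericity : MvPolynomial (Fin 7 ⊕ Fin 7) ℂ :=
  pluckerCoord 2 3 * pluckerCoord 3 4 *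
    (pluckerCoord 2 4 ^ 2 - 2 * pluckerCoord 1 4 * pluckerCoord 3 4)

theorem eval_L7genericity (x x' : Fin 7 → ℂ) :
    eval (Sum.elim x x') L7genericity =
      (x 2 * x' 3 - x 3 * x' 2) * (x 3 * x' 4 - x 4 * x' 3) * ((x 2 * x' 4 - x 4 * x' 2) ^ 2 -
        2 * (x 1 * x' 4 - x 4 * x' 1) * (x 3 * x' 4 - x 4 * x' 3)) := by
  simp [L7genericity]

theorem L7genericity_ne_zero : L7genericity ≠ 0 := fun h => by
  simpa [eval_L7genericity] using
    congrArg (eval (Sum.elim ![0, 0, 1, 0, 1, 0, 0] ![0, 0, 0, 1, 1, 0, 0])) h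

/-- With `R = max_y rank A_y`, there is a nonzero polynomial `F` in 14 variables such
that whenever `F(x, a') ≠ 0` and `(α, β) ≠ (0, 0)`, one has
`rank (α A_x + β A_a') = R`: the generic pencil has no Jordan blocks, i.e.
`L7` is of Kronecker type. -/
theorem L7_kronecker_type (a : ℂ) (R : ℕ)
    (hR : IsGreatest {r : ℕ | ∃ y : Fin 7 → ℂ, (L7mat a y).rank = r} R) :
    ∃ F : MvPolynomial (Fin 7 ⊕ Fin 7) ℂ, F ≠ 0 ∧
      ∀ x a' : Fin 7 → ℂ, MvPolynomial.eval (Sum.elim x a') F ≠ 0 →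
        ∀ α β : ℂ, (α, β) ≠ (0, 0) →
          (α • L7mat a x + β • L7mat a a').rank = R := by
  obtain rfl : R = 6 := hR.unique (isGreatest_rank_L7mat a)
  refine ⟨L7genericity, L7genericity_ne_zero, fun x x' hF α β hαβ => ?_⟩
  obtain ⟨⟨h23, h34⟩, hQ⟩ := by simpa only [eval_L7genericity, mul_ne_zero_iff] using hF
  rw [L7mat_add_smul]
  exact rank_L7mat_eq_six (L7_pfaffian_ne_zero_on_line h23 h34 hQ hαβ)
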